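/- arXiv:1104.4513 — 2 statements merged into one kernel-verified Lean document; each statement's English description precedes it below -/
import Mathlib

section
/- Let X be a random self-adjoint n×n complex matrix (a measurable map from a probability space to the self-adjoint n×n matrices), and let k ≤ n be a positive integer. Then for every real t, the probability that λ_k(X) ≥ t is at most the infimum over θ > 0 of the minimum over V ∈ 𝕍_{n-k+1,n} of e^{-θt} · E[tr exp(θ V* X V)]. -/
open MeasureTheory ProbabilityTheory Matrix
open scoped ENNReal NNReal ComplexOrder

noncomputable section

namespace Paper

/-- Entrywise measurable space on matrices. -/
instance matMeasurableSpace {m l : ℕ} {𝕜 : Type*} [MeasurableSpace 𝕜] :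
    MeasurableSpace (Matrix (Fin m) (Fin l) 𝕜) :=
  show MeasurableSpace (Fin m → Fin l → 𝕜) from inferInstance

/-- The `k`-th largest eigenvalue (1-indexed) of a self-adjoint matrix;
junk value `0` if the matrix is not self-adjoint. -/
noncomputable def lambdaK {𝕜 : Type*} [RCLike 𝕜] {n : ℕ} (k : ℕ)
    (A : Matrix (Fin n) (Fin n) 𝕜) : ℝ :=
  if h : A.IsHermitian then
    (Multiset.sort (↑(List.ofFn h.eigenvalues) : Multiset ℝ) (· ≤ ·)).getD (n - k) 0
  else 0

/-- Matrix exponential of a self-adjoint matrix, via the spectral decomposition;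
junk value `1` if the matrix is not self-adjoint. -/
noncomputable def matExp {𝕜 : Type*} [RCLike 𝕜] {n : ℕ}
    (A : Matrix (Fin n) (Fin n) 𝕜) : Matrix (Fin n) (Fin n) 𝕜 :=
  if h : A.IsHermitian then
    (h.eigenvectorUnitary : Matrix (Fin n) (Fin n) 𝕜) *
      Matrix.diagonal (fun i => ((Real.exp (h.eigenvalues i) : ℝ) : 𝕜)) *
      star (h.eigenvectorUnitary : Matrix (Fin n) (Fin n) 𝕜)
  else 1

/-- Matrix logarithm of a self-adjoint (in applications: positive-definite) matrix,
via the spectral decomposition; junk value `0` if the matrix is not self-adjoint. -/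
noncomputable def matLog {𝕜 : Type*} [RCLike 𝕜] {n : ℕ}
    (A : Matrix (Fin n) (Fin n) 𝕜) : Matrix (Fin n) (Fin n) 𝕜 :=
  if h : A.IsHermitian then
    (h.eigenvectorUnitary : Matrix (Fin n) (Fin n) 𝕜) *
      Matrix.diagonal (fun i => ((Real.log (h.eigenvalues i) : ℝ) : 𝕜)) *
      star (h.eigenvectorUnitary : Matrix (Fin n) (Fin n) 𝕜)
  else 0

/-- The Loewner (semidefinite) order `A ⪯ B`: `B - A` is positive semidefinite. -/
def LoewnerLE {𝕜 : Type*} [RCLike 𝕜] {n : ℕ} (A B : Matrix (Fin n) (Fin n) 𝕜) : Prop :=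
  (B - A).PosSemidef

/-- Entrywise expectation (Bochner integral) of a random matrix. -/
noncomputable def matExpect {Ω : Type*} [MeasurableSpace Ω] (μ : Measure Ω)
    {a b : ℕ} {𝕜 : Type*} [RCLike 𝕜] (X : Ω → Matrix (Fin a) (Fin b) 𝕜) :
    Matrix (Fin a) (Fin b) 𝕜 :=
  Matrix.of fun i j => ∫ ω, X ω i j ∂μ

/-- Entrywise integrability of a random matrix. -/
def MatIntegrable {Ω : Type*} [MeasurableSpace Ω] (μ : Measure Ω)
    {a b : ℕ} {𝕜 : Type*} [RCLike 𝕜] (X : Ω → Matrix (Fin a) (Fin b) 𝕜) : Prop :=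
  ∀ i j, Integrable (fun ω => X ω i j) μ

/-- The Stiefel manifold `𝕍_{d,n}`: isometric embeddings of `𝕜^d` into `𝕜^n`. -/
def Stiefel (𝕜 : Type*) [RCLike 𝕜] (d n : ℕ) : Type _ :=
  {V : Matrix (Fin n) (Fin d) 𝕜 // Vᴴ * V = 1}

/-- Real part of the trace. -/
noncomputable def reTrace {𝕜 : Type*} [RCLike 𝕜] {n : ℕ}
    (A : Matrix (Fin n) (Fin n) 𝕜) : ℝ :=
  RCLike.re A.trace

/-! The bound holds for each `θ > 0` and `V ∈ 𝕍_{n-k+1,n}` separately, by Markov's inequality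
applied to `tr exp(θ V* X V)`, once we know the pointwise estimate
`exp(θ λ_k(A)) ≤ tr exp(θ V* A V)`. For that, note that the range of `V` has dimension
`n - k + 1`, so it meets the span of the eigenvectors of the top `k` eigenvalues of `A`: this gives
a vector `y ≠ 0` with `y* (V* A V) y ≥ λ_k(A) ‖y‖²` (the easy half of Courant–Fischer). Hence
`V* A V` has an eigenvalue `≥ λ_k(A)`, and `tr exp` dominates the exponential of each eigenvalue. -/

end Paper

open Finset

lemma Finset.exists_le_of_mul_sum_le_sum_mul {ι : Type*} {s : Finset ι} {a w : ι → ℝ} {c : ℝ}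
    (hw : ∀ i ∈ s, 0 ≤ w i) (hpos : 0 < ∑ i ∈ s, w i)
    (h : c * ∑ i ∈ s, w i ≤ ∑ i ∈ s, a i * w i) : ∃ i ∈ s, c ≤ a i := by
  obtain ⟨i, hi, hmax⟩ := s.exists_max_image a (nonempty_of_sum_ne_zero hpos.ne')
  refine ⟨i, hi, le_of_mul_le_mul_right ?_ hpos⟩
  calc c * ∑ j ∈ s, w j ≤ ∑ j ∈ s, a j * w j := h
    _ ≤ ∑ j ∈ s, a i * w j :=
      sum_le_sum fun j hj => mul_le_mul_of_nonneg_right (hmax j hj) (hw j hj)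
    _ = a i * ∑ j ∈ s, w j := (mul_sum _ _ _).symm

lemma List.Pairwise.length_sub_le_countP_getD_le {α : Type*} [LinearOrder α] {L : List α}
    (hL : L.Pairwise (· ≤ ·)) (j : ℕ) (x : α) :
    L.length - j ≤ L.countP (fun y => L.getD j x ≤ y) := by
  rcases lt_or_ge j L.length with hj | hj
  · have hdrop : ∀ y ∈ L.drop j, L.getD j x ≤ y := by
      have hsorted := hL.sublist (L.drop_sublist j)
      rw [List.drop_eq_getElem_cons hj, List.pairwise_cons] at hsorted
      rw [List.getD_eq_getElem _ _ hj, List.drop_eq_getElem_cons hj]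
      rintro y (_ | ⟨_, hy⟩)
      exacts [le_rfl, hsorted.1 y hy]
    calc L.length - j = (L.drop j).countP (fun y => L.getD j x ≤ y) := by
          rw [List.countP_eq_length.mpr (by simpa using hdrop), List.length_drop]
      _ ≤ L.countP (fun y => L.getD j x ≤ y) := (L.drop_sublist j).countP_le
  · simp [Nat.sub_eq_zero_of_le hj]

lemma MeasureTheory.measure_le_ofReal_exp_neg_mul_lintegral {Ω : Type*} [MeasurableSpace Ω]
    {μ : Measure Ω} {f : Ω → ℝ≥0∞} (hf : AEMeasurable f μ) {s : Set Ω} (a : ℝ)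
    (hs : ∀ ω ∈ s, ENNReal.ofReal (Real.exp a) ≤ f ω) :
    μ s ≤ ENNReal.ofReal (Real.exp (-a)) * ∫⁻ ω, f ω ∂μ := by
  calc μ s = ENNReal.ofReal (Real.exp (-a)) * (ENNReal.ofReal (Real.exp a) * μ s) := by
        rw [← mul_assoc, ← ENNReal.ofReal_mul (Real.exp_pos _).le, ← Real.exp_add,
          neg_add_cancel, Real.exp_zero, ENNReal.ofReal_one, one_mul]
    _ ≤ ENNReal.ofReal (Real.exp (-a)) *
        (ENNReal.ofReal (Real.exp a) * μ {ω | ENNReal.ofReal (Real.exp a) ≤ f ω}) := by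
        gcongr
        exact hs
    _ ≤ ENNReal.ofReal (Real.exp (-a)) * ∫⁻ ω, f ω ∂μ := by
        gcongr
        exact mul_meas_ge_le_lintegral₀ hf _

namespace Matrix

lemma IsHermitian.real_smul_conjTranspose_mul_mul {𝕜 m n : Type*} [RCLike 𝕜] [Fintype n]
    {A : Matrix n n 𝕜} (hA : A.IsHermitian) (θ : ℝ) (V : Matrix n m 𝕜) :
    (θ • (Vᴴ * A * V)).IsHermitian :=
  (isHermitian_conjTranspose_mul_mul V hA).smul (IsSelfAdjoint.all θ)

variable {𝕜 : Type*} [RCLike 𝕜] {m n : Type*} [Fintype m] [Fintype n]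

lemma star_dotProduct_conjTranspose_mul_mul_mulVec (M : Matrix m n 𝕜) (D : Matrix m m 𝕜)
    (y : n → 𝕜) : star y ⬝ᵥ (Mᴴ * D * M) *ᵥ y = star (M *ᵥ y) ⬝ᵥ D *ᵥ (M *ᵥ y) := by
  rw [← mulVec_mulVec, ← mulVec_mulVec, dotProduct_mulVec (star y), ← star_mulVec]

lemma star_mulVec_dotProduct_mulVec_of_isometry [DecidableEq n] {M : Matrix m n 𝕜}
    (hM : Mᴴ * M = 1) (y : n → 𝕜) : star (M *ᵥ y) ⬝ᵥ (M *ᵥ y) = star y ⬝ᵥ y := by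
  rw [star_mulVec, ← dotProduct_mulVec, mulVec_mulVec, hM, one_mulVec]

lemma re_star_dotProduct_diagonal_mulVec [DecidableEq m] (f : m → ℝ) (z : m → 𝕜) :
    RCLike.re (star z ⬝ᵥ diagonal (RCLike.ofReal ∘ f) *ᵥ z) = ∑ i, f i * ‖z i‖ ^ 2 := by
  simp only [dotProduct, mulVec_diagonal, map_sum, Pi.star_apply, RCLike.star_def,
    Function.comp_apply, mul_left_comm _ (f _ : 𝕜), RCLike.conj_mul]
  norm_cast

lemma re_star_dotProduct_self (z : m → 𝕜) : RCLike.re (star z ⬝ᵥ z) = ∑ i, ‖z i‖ ^ 2 := by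
  classical
  simpa [Function.comp_def] using re_star_dotProduct_diagonal_mulVec (fun _ => 1) z

namespace IsHermitian

variable [DecidableEq n] {A : Matrix n n 𝕜}

lemma conjTranspose_star_eigenvectorUnitary_mul_self (hA : A.IsHermitian) :
    (star (hA.eigenvectorUnitary : Matrix n n 𝕜))ᴴ * star (hA.eigenvectorUnitary : Matrix n n 𝕜)
      = 1 := by
  rw [star_eq_conjTranspose, conjTranspose_conjTranspose, ← star_eq_conjTranspose,
    Unitary.mul_star_self_of_mem hA.eigenvectorUnitary.2]

lemma re_star_dotProduct_mulVec (hA : A.IsHermitian) (y : n → 𝕜) :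
    RCLike.re (star y ⬝ᵥ A *ᵥ y) =
      ∑ i, hA.eigenvalues i * ‖(star (hA.eigenvectorUnitary : Matrix n n 𝕜) *ᵥ y) i‖ ^ 2 := by
  have hA' : A = (star (hA.eigenvectorUnitary : Matrix n n 𝕜))ᴴ *
      diagonal (RCLike.ofReal ∘ hA.eigenvalues) * star (hA.eigenvectorUnitary : Matrix n n 𝕜) := by
    conv_lhs => rw [hA.spectral_theorem, Unitary.conjStarAlgAut_apply]
    rw [star_eq_conjTranspose, conjTranspose_conjTranspose]
  conv_lhs => rw [hA', star_dotProduct_conjTranspose_mul_mul_mulVec]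
  exact re_star_dotProduct_diagonal_mulVec _ _

lemma exists_le_eigenvalues_of_mul_le (hA : A.IsHermitian) {y : n → 𝕜} (hy : y ≠ 0) {c : ℝ}
    (h : c * RCLike.re (star y ⬝ᵥ y) ≤ RCLike.re (star y ⬝ᵥ A *ᵥ y)) :
    ∃ i, c ≤ hA.eigenvalues i := by
  have hnorm : RCLike.re (star y ⬝ᵥ y) =
      ∑ i, ‖(star (hA.eigenvectorUnitary : Matrix n n 𝕜) *ᵥ y) i‖ ^ 2 := by
    rw [← star_mulVec_dotProduct_mulVec_of_isometry
      hA.conjTranspose_star_eigenvectorUnitary_mul_self, re_star_dotProduct_self]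
  have hpos : 0 < RCLike.re (star y ⬝ᵥ y) := by
    obtain ⟨i, hi⟩ := Function.ne_iff.mp hy
    rw [re_star_dotProduct_self]
    exact sum_pos' (fun j _ => sq_nonneg _) ⟨i, mem_univ i, by positivity⟩
  rw [hA.re_star_dotProduct_mulVec, hnorm] at h
  rw [hnorm] at hpos
  simpa using exists_le_of_mul_sum_le_sum_mul (fun i _ => sq_nonneg _) hpos h

lemma exists_ne_zero_mul_le_re_conjTranspose_mul_mul (hA : A.IsHermitian) [DecidableEq m]
    {V : Matrix n m 𝕜} (hV : Vᴴ * V = 1) {c : ℝ}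
    (hcard : Fintype.card n < Fintype.card m + #{i | c ≤ hA.eigenvalues i}) :
    ∃ y ≠ 0, c * RCLike.re (star y ⬝ᵥ y) ≤ RCLike.re (star y ⬝ᵥ (Vᴴ * A * V) *ᵥ y) := by
  set S : Finset n := {i | c ≤ hA.eigenvalues i}
  set M := star (hA.eigenvectorUnitary : Matrix n n 𝕜) * V
  -- A nonzero `y` in the kernel of `T` makes `M *ᵥ y` vanish off the eigenvalues `≥ c`.
  let T : (m → 𝕜) →ₗ[𝕜] ((Sᶜ : Finset n) → 𝕜) :=
    (LinearMap.funLeft 𝕜 𝕜 ((↑) : (Sᶜ : Finset n) → n)).comp M.mulVecLin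
  have hker : LinearMap.ker T ≠ ⊥ := LinearMap.ker_ne_bot_of_finrank_lt (by
    simp only [Module.finrank_fintype_fun_eq_card, Fintype.card_coe, card_compl]
    have := S.card_le_univ
    omega)
  obtain ⟨y, hyT, hy⟩ := (Submodule.ne_bot_iff _).mp hker
  have hz : ∀ i ∉ S, (M *ᵥ y) i = 0 := fun i hi =>
    congrFun (LinearMap.mem_ker.mp hyT) ⟨i, mem_compl.mpr hi⟩
  have hquad : RCLike.re (star y ⬝ᵥ (Vᴴ * A * V) *ᵥ y) =
      ∑ i, hA.eigenvalues i * ‖(M *ᵥ y) i‖ ^ 2 := by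
    rw [star_dotProduct_conjTranspose_mul_mul_mulVec, hA.re_star_dotProduct_mulVec, mulVec_mulVec]
  have hnorm : RCLike.re (star y ⬝ᵥ y) = ∑ i, ‖(M *ᵥ y) i‖ ^ 2 := by
    rw [← star_mulVec_dotProduct_mulVec_of_isometry hV,
      ← star_mulVec_dotProduct_mulVec_of_isometry hA.conjTranspose_star_eigenvectorUnitary_mul_self,
      re_star_dotProduct_self, mulVec_mulVec]
  refine ⟨y, hy, ?_⟩
  rw [hquad, hnorm, mul_sum]
  refine sum_le_sum fun i _ => ?_
  by_cases hi : i ∈ S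
  · exact mul_le_mul_of_nonneg_right (mem_filter.mp hi).2 (sq_nonneg _)
  · simp [hz i hi]

end IsHermitian

end Matrix

namespace Paper

instance matBorelSpace {m l : ℕ} {𝕜 : Type*} [TopologicalSpace 𝕜] [MeasurableSpace 𝕜]
    [BorelSpace 𝕜] [SecondCountableTopology 𝕜] : BorelSpace (Matrix (Fin m) (Fin l) 𝕜) :=
  inferInstanceAs (BorelSpace (Fin m → Fin l → 𝕜))

section

variable {𝕜 : Type*} [RCLike 𝕜] {n : ℕ}

/-- `lambdaK k A` is entry `n - k` of the ascending list of eigenvalues; the `min` accounts for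
the truncated subtraction when `n < k`. -/
lemma min_le_card_filter_lambdaK_le_eigenvalues {A : Matrix (Fin n) (Fin n) 𝕜}
    (hA : A.IsHermitian) (k : ℕ) : min k n ≤ #{i | lambdaK k A ≤ hA.eigenvalues i} := by
  set L := Multiset.sort (↑(List.ofFn hA.eigenvalues) : Multiset ℝ) (· ≤ ·)
  have hlen : L.length = n := by simp [L]
  have hcount (c : ℝ) : #{i | c ≤ hA.eigenvalues i} = L.countP (fun y => c ≤ y) := by
    rw [← Multiset.coe_countP, Multiset.sort_eq, ← Fin.univ_val_map, Multiset.countP_map]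
    rfl
  rw [lambdaK, dif_pos hA, hcount]
  calc min k n = L.length - (n - k) := by omega
    _ ≤ _ := (Multiset.pairwise_sort _ _).length_sub_le_countP_getD_le _ _

lemma reTrace_matExp {C : Matrix (Fin n) (Fin n) 𝕜} (hC : C.IsHermitian) :
    reTrace (matExp C) = ∑ i, Real.exp (hC.eigenvalues i) := by
  rw [matExp, dif_pos hC, reTrace, trace_mul_cycle, Unitary.coe_star_mul_self, one_mul,
    trace_diagonal, map_sum]
  simp

lemma exp_eigenvalues_le_reTrace_matExp {C : Matrix (Fin n) (Fin n) 𝕜} (hC : C.IsHermitian)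
    (i : Fin n) : Real.exp (hC.eigenvalues i) ≤ reTrace (matExp C) := by
  rw [reTrace_matExp hC]
  exact single_le_sum (fun j _ => (Real.exp_pos _).le) (mem_univ i)

lemma matExp_eq_exp {C : Matrix (Fin n) (Fin n) 𝕜} (hC : C.IsHermitian) :
    matExp C = NormedSpace.exp C := by
  set U := (hC.eigenvectorUnitary : Matrix (Fin n) (Fin n) 𝕜)
  have hU : IsUnit U := (Unitary.toUnits hC.eigenvectorUnitary).isUnit
  have hUinv : U⁻¹ = star U := inv_eq_left_inv (Unitary.coe_star_mul_self _)
  conv_rhs => rw [hC.spectral_theorem, Unitary.conjStarAlgAut_apply, ← hUinv,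
    exp_conj U _ hU, exp_diagonal, hUinv]
  rw [matExp, dif_pos hC]
  congr 3
  funext i
  simp [Real.exp_eq_exp_ℝ, ← RCLike.algebraMap_eq_ofReal, NormedSpace.algebraMap_exp_comm]

-- `NormedSpace.exp` does not depend on the norm; the operator norm only supplies the instances.
open scoped Matrix.Norms.Operator in
lemma continuous_reTrace_exp :
    Continuous fun C : Matrix (Fin n) (Fin n) 𝕜 => reTrace (NormedSpace.exp C) :=
  RCLike.continuous_re.comp (continuous_id.matrix_trace.comp NormedSpace.exp_continuous)

lemma measurable_reTrace_matExp {Ω : Type*} [MeasurableSpace Ω]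
    {Y : Ω → Matrix (Fin n) (Fin n) 𝕜} (hY : Measurable Y) (hYh : ∀ ω, (Y ω).IsHermitian) :
    Measurable fun ω => reTrace (matExp (Y ω)) := by
  simp only [matExp_eq_exp (hYh _)]
  exact continuous_reTrace_exp.measurable.comp hY

lemma exp_mul_lambdaK_le_reTrace_matExp {d k : ℕ} {A : Matrix (Fin n) (Fin n) 𝕜}
    (hA : A.IsHermitian) {V : Matrix (Fin n) (Fin d) 𝕜} (hV : Vᴴ * V = 1) (hd : n < d + min k n)
    {θ : ℝ} (hθ : 0 ≤ θ) :
    Real.exp (θ * lambdaK k A) ≤ reTrace (matExp (θ • (Vᴴ * A * V))) := by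
  have hC := hA.real_smul_conjTranspose_mul_mul θ V
  obtain ⟨y, hy, hle⟩ := hA.exists_ne_zero_mul_le_re_conjTranspose_mul_mul hV (c := lambdaK k A)
    (by simpa using
      hd.trans_le (add_le_add_right (min_le_card_filter_lambdaK_le_eigenvalues hA k) d))
  obtain ⟨i, hi⟩ := hC.exists_le_eigenvalues_of_mul_le hy (c := θ * lambdaK k A) (by
    rw [smul_mulVec, dotProduct_smul, RCLike.real_smul_eq_coe_mul, RCLike.re_ofReal_mul, mul_assoc]
    exact mul_le_mul_of_nonneg_left hle hθ)
  exact (Real.exp_le_exp.mpr hi).trans (exp_eigenvalues_le_reTrace_matExp hC i)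

end

theorem minimax_laplace_transform_single_general
    {Ω : Type*} [MeasurableSpace Ω] (μ : Measure Ω)
    {n : ℕ} (X : Ω → Matrix (Fin n) (Fin n) ℂ)
    (hXmeas : Measurable X) (hXsa : ∀ ω, (X ω).IsHermitian)
    (k : ℕ) (t : ℝ) :
    μ {ω | t ≤ lambdaK k (X ω)} ≤
      ⨅ θ : {x : ℝ // 0 < x}, ⨅ V : Stiefel ℂ (n - k + 1) n,
        ENNReal.ofReal (Real.exp (-(θ : ℝ) * t)) *
          ∫⁻ ω, ENNReal.ofReal (reTrace (matExp ((θ : ℝ) • (V.1ᴴ * X ω * V.1)))) ∂μ := by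
  refine le_iInf fun θ => le_iInf fun V => ?_
  have hconj : Measurable fun ω => (θ : ℝ) • (V.1ᴴ * X ω * V.1) :=
    (by fun_prop : Continuous fun M : Matrix (Fin n) (Fin n) ℂ => (θ : ℝ) • (V.1ᴴ * M * V.1))
      |>.measurable.comp hXmeas
  have hmeas := measurable_reTrace_matExp hconj
    fun ω => (hXsa ω).real_smul_conjTranspose_mul_mul θ V.1
  rw [neg_mul]
  refine measure_le_ofReal_exp_neg_mul_lintegral hmeas.ennreal_ofReal.aemeasurable _
    fun ω hω => ENNReal.ofReal_le_ofReal ?_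
  calc Real.exp (θ * t) ≤ Real.exp (θ * lambdaK k (X ω)) :=
        Real.exp_le_exp.mpr (mul_le_mul_of_nonneg_left hω θ.2.le)
    _ ≤ _ := exp_mul_lambdaK_le_reTrace_matExp (hXsa ω) V.2 (by omega) θ.2.le

theorem minimax_laplace_transform_single
    {Ω : Type*} [MeasurableSpace Ω] (μ : Measure Ω) [IsProbabilityMeasure μ]
    {n : ℕ} (X : Ω → Matrix (Fin n) (Fin n) ℂ)
    (hXmeas : Measurable X) (hXsa : ∀ ω, (X ω).IsHermitian)
    (k : ℕ) (hk1 : 1 ≤ k) (hkn : k ≤ n) (t : ℝ) :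
    μ {ω | t ≤ lambdaK k (X ω)} ≤
      ⨅ θ : {x : ℝ // 0 < x}, ⨅ V : Stiefel ℂ (n - k + 1) n,
        ENNReal.ofReal (Real.exp (-(θ : ℝ) * t)) *
          ∫⁻ ω, ENNReal.ofReal (reTrace (matExp ((θ : ℝ) • (V.1ᴴ * X ω * V.1)))) ∂μ :=
  minimax_laplace_transform_single_general μ X hXmeas hXsa k t

end Paper
end
end

section
/- Let G be a positive-semidefinite p×p real symmetric matrix and let ξ be a random vector in ℝ^p with distribution N(0, G). Then for every integer m ≥ 2, one has the semidefinite inequality E[(ξ ξ^T)^m] ⪯ 2^m · m! · (tr G)^{m−1} · G. -/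
open MeasureTheory ProbabilityTheory Matrix
open scoped ENNReal NNReal ComplexOrder

noncomputable section

namespace Paper

/-- `ν` is the centered Gaussian measure on `ℝ^p` with covariance matrix `C`,
characterized by its one-dimensional projections. -/
def IsCenteredGaussian {p : ℕ} (C : Matrix (Fin p) (Fin p) ℝ)
    (ν : Measure (Fin p → ℝ)) : Prop :=
  ∀ u : Fin p → ℝ,
    ν.map (fun x => ∑ i, u i * x i) = gaussianReal 0 (Real.toNNReal (u ⬝ᵥ C *ᵥ u))

/-! Since `(ξξᵀ)^m = |ξ|^(2(m-1)) ξξᵀ`, the quadratic form of the left-hand side at `x` is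
`E[|ξ|^(2(m-1)) ⟨x, ξ⟩²]`. Expanding `|ξ|² = ∑ᵢ ⟨eᵢ, ξ⟩²` turns it into a sum, over
`g : Fin (m-1) → Fin p`, of mixed moments `E[∏ⱼ ⟨wⱼ, ξ⟩²]` of `m` centered Gaussian variables.
By AM-GM such a moment is at most the mean of the pure moments `E[⟨wⱼ, ξ⟩^(2m)] / σⱼ^m` times
`∏ⱼ σⱼ`, where `σⱼ = ⟨wⱼ, G wⱼ⟩` (a factor with `σⱼ = 0` vanishes almost surely), and
integration by parts gives `E[⟨w, ξ⟩^(2m)] = (2m-1)‼ σ^m ≤ 2^m m! σ^m`.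
Summing back over `g` turns `∏ σ` into `⟨x, G x⟩ (tr G)^(m-1)`. -/

open Real Nat

theorem integrable_pow_mul_exp_neg_mul_sq {b : ℝ} (hb : 0 < b) (k : ℕ) :
    Integrable (fun x : ℝ => x ^ k * exp (-b * x ^ 2)) := by
  simpa using integrable_rpow_mul_exp_neg_mul_sq hb (s := k) (by linarith [k.cast_nonneg (α := ℝ)])

theorem integral_pow_two_mul_add_two_mul_exp_neg_mul_sq {b : ℝ} (hb : 0 < b) (k : ℕ) :
    ∫ x : ℝ, x ^ (2 * k + 2) * exp (-b * x ^ 2)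
      = (2 * k + 1) / (2 * b) * ∫ x : ℝ, x ^ (2 * k) * exp (-b * x ^ 2) := by
  have hderiv : ∀ x : ℝ, HasDerivAt (fun x => x ^ (2 * k + 1) * exp (-b * x ^ 2))
      ((2 * k + 1) * (x ^ (2 * k) * exp (-b * x ^ 2))
        - 2 * b * (x ^ (2 * k + 2) * exp (-b * x ^ 2))) x := by
    intro x
    refine ((hasDerivAt_pow (2 * k + 1) x).fun_mul
      (((hasDerivAt_pow 2 x).const_mul (-b)).exp)).congr_deriv ?_
    rw [Nat.add_sub_cancel]
    push_cast
    ring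
  have h := integral_eq_zero_of_hasDerivAt_of_integrable hderiv
    (((integrable_pow_mul_exp_neg_mul_sq hb _).const_mul _).sub
      ((integrable_pow_mul_exp_neg_mul_sq hb _).const_mul _))
    (integrable_pow_mul_exp_neg_mul_sq hb _)
  rw [integral_sub ((integrable_pow_mul_exp_neg_mul_sq hb _).const_mul _)
    ((integrable_pow_mul_exp_neg_mul_sq hb _).const_mul _), integral_const_mul,
    integral_const_mul, sub_eq_zero] at h
  rw [div_mul_eq_mul_div, eq_div_iff (by positivity)]
  linarith

theorem integral_pow_two_mul_mul_exp_neg_mul_sq {b : ℝ} (hb : 0 < b) (n : ℕ) :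
    ∫ x : ℝ, x ^ (2 * n) * exp (-b * x ^ 2) = (2 * n - 1)‼ / (2 * b) ^ n * √(π / b) := by
  induction n with
  | zero => simpa using integral_gaussian b
  | succ n ih =>
    rw [show 2 * (n + 1) = 2 * n + 2 by ring, integral_pow_two_mul_add_two_mul_exp_neg_mul_sq hb,
      ih, show 2 * n + 2 - 1 = 2 * n + 1 by omega, doubleFactorial_add_one]
    push_cast
    field_simp
    ring

theorem integral_pow_two_mul_gaussianReal (v : ℝ≥0) (n : ℕ) :
    ∫ x, x ^ (2 * n) ∂gaussianReal 0 v = (2 * n - 1)‼ * (v : ℝ) ^ n := by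
  rcases eq_or_ne v 0 with rfl | hv
  · cases n <;> simp [gaussianReal_zero_var]
  have hb : 0 < (2 * (v : ℝ))⁻¹ := by positivity
  have hpdf : ∀ x, gaussianPDFReal 0 v x • x ^ (2 * n)
      = (√(2 * π * v))⁻¹ * (x ^ (2 * n) * exp (-(2 * (v : ℝ))⁻¹ * x ^ 2)) := by
    intro x
    rw [gaussianPDFReal, smul_eq_mul, sub_zero, neg_div, div_eq_inv_mul, neg_mul]
    ring
  simp_rw [integral_gaussianReal_eq_integral_smul hv, hpdf]
  rw [integral_const_mul, integral_pow_two_mul_mul_exp_neg_mul_sq hb,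
    show π / (2 * (v : ℝ))⁻¹ = 2 * π * v by field_simp]
  field_simp
  rw [one_div, inv_pow, inv_mul_cancel₀ (pow_ne_zero _ (by positivity))]

theorem doubleFactorial_two_mul_sub_one_le (n : ℕ) : (2 * n - 1)‼ ≤ 2 ^ n * n ! := by
  induction n with
  | zero => simp
  | succ n ih =>
    rw [show 2 * (n + 1) - 1 = 2 * n + 1 by omega, doubleFactorial_add_one, factorial_succ,
      pow_succ]
    calc (2 * n + 1) * (2 * n - 1)‼ ≤ (2 * (n + 1)) * (2 ^ n * n !) :=
          Nat.mul_le_mul (by omega) ih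
      _ = 2 ^ n * 2 * ((n + 1) * n !) := by ring

theorem integrable_pow_two_mul_gaussianReal (μ : ℝ) (v : ℝ≥0) (n : ℕ) :
    Integrable (fun x => x ^ (2 * n)) (gaussianReal μ v) := by
  have h := (memLp_id_gaussianReal (μ := μ) (v := v) (2 * n : ℕ)).integrable_norm_pow'
  simpa [pow_mul, sq_abs] using h

theorem prod_le_sum_pow_div {n : ℕ} (hn : n ≠ 0) (a : Fin n → ℝ) (ha : ∀ j, 0 ≤ a j) :
    ∏ j, a j ≤ (∑ j, a j ^ n) / n := by
  have h := geom_mean_le_arith_mean_weighted Finset.univ (fun _ => (n : ℝ)⁻¹) (fun j => a j ^ n)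
    (fun _ _ => by positivity) (by simp [hn]) (fun j _ => pow_nonneg (ha j) n)
  simp only [pow_rpow_inv_natCast (ha _) hn, ← Finset.mul_sum] at h
  rwa [inv_mul_eq_div] at h

section MatrixAlgebra

variable {n : ℕ}

theorem vecMulVec_self_pow_succ {R : Type*} [CommSemiring R] (v : Fin n → R) (k : ℕ) :
    vecMulVec v v ^ (k + 1) = (v ⬝ᵥ v) ^ k • vecMulVec v v := by
  induction k with
  | zero => simp
  | succ k ih =>
    rw [pow_succ, ih, smul_mul, vecMulVec_mul_vecMulVec, vecMulVec_smul, smul_smul, pow_succ]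

theorem dotProduct_vecMulVec_self_pow_succ_mulVec (x y : Fin n → ℝ) (k : ℕ) :
    x ⬝ᵥ vecMulVec y y ^ (k + 1) *ᵥ x = (y ⬝ᵥ y) ^ k * (x ⬝ᵥ y) ^ 2 := by
  rw [vecMulVec_self_pow_succ, smul_mulVec, vecMulVec_mulVec, dotProduct_smul]
  simp [dotProduct_comm y x, sq]

def consSingle {k : ℕ} (w : Fin n → ℝ) (g : Fin k → Fin n) : Fin (k + 1) → Fin n → ℝ :=
  Fin.cons w fun t => Pi.single (g t) 1

theorem sum_prod_consSingle {R : Type*} [CommSemiring R] (q : (Fin n → ℝ) → R)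
    (w : Fin n → ℝ) (k : ℕ) :
    ∑ g : Fin k → Fin n, ∏ j, q (consSingle w g j) = q w * (∑ i, q (Pi.single i 1)) ^ k := by
  simp [consSingle, Fin.prod_univ_succ, Fintype.sum_pow, Finset.mul_sum]

theorem dotProduct_self_pow_mul_sq_eq_sum (w y : Fin n → ℝ) (k : ℕ) :
    (y ⬝ᵥ y) ^ k * (w ⬝ᵥ y) ^ 2 = ∑ g : Fin k → Fin n, ∏ j, (consSingle w g j ⬝ᵥ y) ^ 2 := by
  rw [sum_prod_consSingle (fun v => (v ⬝ᵥ y) ^ 2), mul_comm]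
  simp only [single_one_dotProduct, sq]
  rfl

end MatrixAlgebra

section GaussianVector

variable {p : ℕ} {G : Matrix (Fin p) (Fin p) ℝ} {ν : Measure (Fin p → ℝ)}

theorem measurable_dotProduct (w : Fin p → ℝ) : Measurable (w ⬝ᵥ · : (Fin p → ℝ) → ℝ) :=
  (continuous_const.dotProduct continuous_id).measurable

namespace IsCenteredGaussian

theorem map_dotProduct (hν : IsCenteredGaussian G ν) (w : Fin p → ℝ) :
    ν.map (w ⬝ᵥ ·) = gaussianReal 0 (w ⬝ᵥ G *ᵥ w).toNNReal :=
  hν w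

theorem integrable_dotProduct_pow_two_mul (hν : IsCenteredGaussian G ν) (w : Fin p → ℝ)
    (n : ℕ) : Integrable (fun y => (w ⬝ᵥ y) ^ (2 * n)) ν := by
  have h := integrable_pow_two_mul_gaussianReal 0 (w ⬝ᵥ G *ᵥ w).toNNReal n
  rw [← hν.map_dotProduct] at h
  exact (integrable_map_measure (continuous_pow _).aestronglyMeasurable
    (measurable_dotProduct w).aemeasurable).mp h

theorem integral_dotProduct_pow_two_mul (hG : G.PosSemidef) (hν : IsCenteredGaussian G ν)
    (w : Fin p → ℝ) (n : ℕ) :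
    ∫ y, (w ⬝ᵥ y) ^ (2 * n) ∂ν = (2 * n - 1)‼ * (w ⬝ᵥ G *ᵥ w) ^ n := by
  have h := integral_pow_two_mul_gaussianReal (w ⬝ᵥ G *ᵥ w).toNNReal n
  rwa [← hν.map_dotProduct, integral_map (measurable_dotProduct w).aemeasurable
    (continuous_pow _).aestronglyMeasurable,
    coe_toNNReal _ (by simpa using hG.dotProduct_mulVec_nonneg w)] at h

theorem integral_dotProduct_pow_two_mul_le (hG : G.PosSemidef) (hν : IsCenteredGaussian G ν)
    (w : Fin p → ℝ) (n : ℕ) :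
    ∫ y, (w ⬝ᵥ y) ^ (2 * n) ∂ν ≤ 2 ^ n * n ! * (w ⬝ᵥ G *ᵥ w) ^ n := by
  rw [hν.integral_dotProduct_pow_two_mul hG]
  gcongr
  · exact pow_nonneg (by simpa using hG.dotProduct_mulVec_nonneg w) n
  · exact_mod_cast doubleFactorial_two_mul_sub_one_le n

theorem ae_dotProduct_eq_zero (hν : IsCenteredGaussian G ν) {w : Fin p → ℝ}
    (hw : w ⬝ᵥ G *ᵥ w = 0) : ∀ᵐ y ∂ν, w ⬝ᵥ y = 0 := by
  have h := hν.map_dotProduct w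
  rw [hw, toNNReal_zero, gaussianReal_zero_var] at h
  refine ae_of_ae_map (p := (· = 0)) (measurable_dotProduct w).aemeasurable ?_
  rw [h]
  exact (ae_dirac_iff (measurableSet_singleton 0)).2 rfl

theorem integrable_prod_sq_dotProduct (hν : IsCenteredGaussian G ν) {n : ℕ} (hn : n ≠ 0)
    (w : Fin n → Fin p → ℝ) : Integrable (fun y => ∏ j, (w j ⬝ᵥ y) ^ 2) ν := by
  refine Integrable.mono' ((integrable_finsetSum Finset.univ fun j _ =>
    hν.integrable_dotProduct_pow_two_mul (w j) n).div_const (n : ℝ)) ?_ ?_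
  · exact (Finset.measurable_prod _ fun j _ =>
      (measurable_dotProduct (w j)).pow_const 2).aestronglyMeasurable
  · refine Filter.Eventually.of_forall fun y => ?_
    rw [Real.norm_of_nonneg (by positivity)]
    simpa only [← pow_mul] using prod_le_sum_pow_div hn _ fun j => sq_nonneg (w j ⬝ᵥ y)

theorem integral_prod_sq_dotProduct_le (hG : G.PosSemidef) (hν : IsCenteredGaussian G ν)
    {n : ℕ} (hn : n ≠ 0) (w : Fin n → Fin p → ℝ) :
    ∫ y, ∏ j, (w j ⬝ᵥ y) ^ 2 ∂ν ≤ 2 ^ n * n ! * ∏ j, (w j ⬝ᵥ G *ᵥ w j) := by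
  set σ : Fin n → ℝ := fun j => w j ⬝ᵥ G *ᵥ w j
  have hσ : ∀ j, 0 ≤ σ j := fun j => by simpa using hG.dotProduct_mulVec_nonneg (w j)
  by_cases hzero : ∃ j, σ j = 0
  · obtain ⟨j₀, hj₀⟩ := hzero
    have hae : (fun y => ∏ j, (w j ⬝ᵥ y) ^ 2) =ᵐ[ν] fun _ => 0 := by
      filter_upwards [hν.ae_dotProduct_eq_zero hj₀] with y hy
      exact Finset.prod_eq_zero (Finset.mem_univ j₀) (by simp [hy])
    rw [integral_congr_ae hae, integral_zero]
    exact mul_nonneg (by positivity) (Finset.prod_nonneg fun j _ => hσ j)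
  simp only [not_exists] at hzero
  have hamgm : ∀ y, ∏ j, (w j ⬝ᵥ y) ^ 2
      ≤ ∑ j, (∏ i, σ i) / (n * σ j ^ n) * (w j ⬝ᵥ y) ^ (2 * n) := by
    intro y
    calc ∏ j, (w j ⬝ᵥ y) ^ 2 = (∏ i, σ i) * ∏ j, ((w j ⬝ᵥ y) ^ 2 / σ j) := by
          rw [← Finset.prod_mul_distrib]
          exact Finset.prod_congr rfl fun j _ => by field_simp [hzero j]
      _ ≤ (∏ i, σ i) * ((∑ j, ((w j ⬝ᵥ y) ^ 2 / σ j) ^ n) / n) := by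
          gcongr
          · exact Finset.prod_nonneg fun j _ => hσ j
          · exact prod_le_sum_pow_div hn _ fun j => by have := hσ j; positivity
      _ = _ := by
          rw [Finset.sum_div, Finset.mul_sum]
          exact Finset.sum_congr rfl fun j _ => by rw [div_pow, ← pow_mul]; field_simp
  have hint : ∀ j, Integrable (fun y => (∏ i, σ i) / (n * σ j ^ n) * (w j ⬝ᵥ y) ^ (2 * n)) ν :=
    fun j => (hν.integrable_dotProduct_pow_two_mul (w j) n).const_mul _
  calc ∫ y, ∏ j, (w j ⬝ᵥ y) ^ 2 ∂ν
      ≤ ∫ y, ∑ j, (∏ i, σ i) / (n * σ j ^ n) * (w j ⬝ᵥ y) ^ (2 * n) ∂ν :=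
        integral_mono (hν.integrable_prod_sq_dotProduct hn w)
          (integrable_finsetSum _ fun j _ => hint j) hamgm
    _ = ∑ j, (∏ i, σ i) / (n * σ j ^ n) * ∫ y, (w j ⬝ᵥ y) ^ (2 * n) ∂ν := by
        rw [integral_finsetSum _ fun j _ => hint j]
        simp_rw [integral_const_mul]
    _ ≤ ∑ j, (∏ i, σ i) / (n * σ j ^ n) * (2 ^ n * n ! * σ j ^ n) := by
        gcongr with j
        · exact div_nonneg (Finset.prod_nonneg fun i _ => hσ i) (by have := hσ j; positivity)
        · exact hν.integral_dotProduct_pow_two_mul_le hG (w j) n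
    _ = 2 ^ n * n ! * ∏ j, σ j := by
        have hterm : ∀ j, (∏ i, σ i) / (n * σ j ^ n) * (2 ^ n * n ! * σ j ^ n)
            = 2 ^ n * n ! * (∏ i, σ i) / n := fun j => by field_simp [hzero j]
        simp only [hterm, Finset.sum_const, Finset.card_univ, Fintype.card_fin, nsmul_eq_mul]
        field_simp

theorem integrable_dotProduct_self_pow_mul_sq (hν : IsCenteredGaussian G ν) (w : Fin p → ℝ)
    (k : ℕ) : Integrable (fun y => (y ⬝ᵥ y) ^ k * (w ⬝ᵥ y) ^ 2) ν := by
  simp_rw [dotProduct_self_pow_mul_sq_eq_sum w _ k]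
  exact integrable_finsetSum _ fun g _ => hν.integrable_prod_sq_dotProduct k.succ_ne_zero _

theorem integral_dotProduct_self_pow_mul_sq_le (hG : G.PosSemidef) (hν : IsCenteredGaussian G ν)
    (w : Fin p → ℝ) (k : ℕ) :
    ∫ y, (y ⬝ᵥ y) ^ k * (w ⬝ᵥ y) ^ 2 ∂ν
      ≤ 2 ^ (k + 1) * (k + 1)! * G.trace ^ k * (w ⬝ᵥ G *ᵥ w) := by
  simp_rw [dotProduct_self_pow_mul_sq_eq_sum w _ k]
  rw [integral_finsetSum _ fun g _ => hν.integrable_prod_sq_dotProduct k.succ_ne_zero _]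
  calc _ ≤ ∑ g : Fin k → Fin p,
        2 ^ (k + 1) * (k + 1)! * ∏ j, (consSingle w g j ⬝ᵥ G *ᵥ consSingle w g j) :=
        Finset.sum_le_sum fun g _ => hν.integral_prod_sq_dotProduct_le hG k.succ_ne_zero _
    _ = _ := by
        rw [← Finset.mul_sum, sum_prod_consSingle (fun v => v ⬝ᵥ G *ᵥ v)]
        simp only [single_one_dotProduct, mulVec_single_one, col_apply, trace, diag]
        ring

end IsCenteredGaussian

end GaussianVector

section Expectation

variable {Ω : Type*} [MeasurableSpace Ω] {μ : Measure Ω} {n : ℕ}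

theorem matExpect_map {β : Type*} [MeasurableSpace β] {a b : ℕ} {𝕜 : Type*} [RCLike 𝕜]
    {ξ : Ω → β} (hξ : AEMeasurable ξ μ) {X : β → Matrix (Fin a) (Fin b) 𝕜}
    (hX : ∀ i j, AEStronglyMeasurable (fun y => X y i j) (μ.map ξ)) :
    matExpect (μ.map ξ) X = matExpect μ fun ω => X (ξ ω) := by
  ext i j
  exact integral_map hξ (hX i j)

theorem isHermitian_matExpect {X : Ω → Matrix (Fin n) (Fin n) ℝ} (hX : ∀ ω, (X ω).IsHermitian) :
    (matExpect μ X).IsHermitian := by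
  ext i j
  simp only [matExpect, conjTranspose_apply, of_apply, star_trivial]
  exact integral_congr_ae (Filter.Eventually.of_forall fun ω => by simpa using (hX ω).apply i j)

theorem dotProduct_matExpect_mulVec {X : Ω → Matrix (Fin n) (Fin n) ℝ} (hX : MatIntegrable μ X)
    (x : Fin n → ℝ) : x ⬝ᵥ matExpect μ X *ᵥ x = ∫ ω, x ⬝ᵥ X ω *ᵥ x ∂μ := by
  simp only [dotProduct, mulVec, matExpect, of_apply, Finset.mul_sum]
  rw [integral_finsetSum _ fun i _ => integrable_finsetSum _ fun j _ =>
    ((hX i j).mul_const _).const_mul _]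
  refine Finset.sum_congr rfl fun i _ => ?_
  rw [integral_finsetSum _ fun j _ => ((hX i j).mul_const _).const_mul _]
  refine Finset.sum_congr rfl fun j _ => ?_
  rw [integral_const_mul, integral_mul_const]

theorem matIntegrable_of_integrable_dotProduct_mulVec {X : Ω → Matrix (Fin n) (Fin n) ℝ}
    (hX : ∀ ω, (X ω).IsHermitian) (h : ∀ x, Integrable (fun ω => x ⬝ᵥ X ω *ᵥ x) μ) :
    MatIntegrable μ X := by
  intro i j
  set e : Fin n → Fin n → ℝ := fun i => Pi.single i 1
  have hpol : ∀ ω, X ω i j = ((e i + e j) ⬝ᵥ X ω *ᵥ (e i + e j)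
      - e i ⬝ᵥ X ω *ᵥ e i - e j ⬝ᵥ X ω *ᵥ e j) / 2 := by
    intro ω
    have hsymm : X ω j i = X ω i j := by simpa using (hX ω).apply i j
    simp only [e, add_dotProduct, mulVec_add, dotProduct_add, single_one_dotProduct,
      mulVec_single_one, col_apply, hsymm]
    ring
  simp_rw [hpol]
  exact (((h _).sub (h _)).sub (h _)).div_const 2

theorem loewnerLE_of_dotProduct_mulVec_le {A B : Matrix (Fin n) (Fin n) ℝ} (hA : A.IsHermitian)
    (hB : B.IsHermitian) (h : ∀ x, x ⬝ᵥ A *ᵥ x ≤ x ⬝ᵥ B *ᵥ x) : LoewnerLE A B :=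
  PosSemidef.of_dotProduct_mulVec_nonneg (hB.sub hA) fun x => by
    simpa [sub_mulVec, dotProduct_sub] using h x

end Expectation

theorem IsCenteredGaussian.loewnerLE_matExpect_vecMulVec_pow {p : ℕ}
    {G : Matrix (Fin p) (Fin p) ℝ} {ν : Measure (Fin p → ℝ)} (hG : G.PosSemidef)
    (hν : IsCenteredGaussian G ν) (k : ℕ) :
    LoewnerLE (matExpect ν fun y => vecMulVec y y ^ (k + 1))
      ((2 ^ (k + 1) * (k + 1)! * G.trace ^ k) • G) := by
  have hherm : ∀ y : Fin p → ℝ, (vecMulVec y y ^ (k + 1)).IsHermitian := fun y =>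
    IsHermitian.pow (by simp [IsHermitian]) _
  refine loewnerLE_of_dotProduct_mulVec_le (isHermitian_matExpect hherm)
    (hG.1.smul (IsSelfAdjoint.all _)) fun x => ?_
  rw [dotProduct_matExpect_mulVec (matIntegrable_of_integrable_dotProduct_mulVec hherm fun x => by
      simpa only [dotProduct_vecMulVec_self_pow_succ_mulVec] using
        hν.integrable_dotProduct_self_pow_mul_sq x k), smul_mulVec, dotProduct_smul, smul_eq_mul]
  simpa only [dotProduct_vecMulVec_self_pow_succ_mulVec] using
    hν.integral_dotProduct_self_pow_mul_sq_le hG x k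

theorem wishart_moment_bound_general
    {Ω : Type*} [MeasurableSpace Ω] (μ : Measure Ω)
    {p : ℕ} (G : Matrix (Fin p) (Fin p) ℝ) (hG : G.PosSemidef)
    (ξ : Ω → (Fin p → ℝ)) (hmeas : Measurable ξ)
    (hgauss : IsCenteredGaussian G (μ.map ξ))
    (m : ℕ) (hm : 2 ≤ m) :
    LoewnerLE (matExpect μ fun ω => (vecMulVec (ξ ω) (ξ ω)) ^ m)
      ((2 ^ m * (m.factorial : ℝ) * G.trace ^ (m - 1)) • G) := by
  obtain ⟨k, rfl⟩ : ∃ k, m = k + 1 := ⟨m - 1, by omega⟩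
  rw [← matExpect_map (X := fun y => vecMulVec y y ^ (k + 1)) hmeas.aemeasurable
    fun i j => by fun_prop, Nat.add_sub_cancel]
  exact hgauss.loewnerLE_matExpect_vecMulVec_pow hG k

theorem wishart_moment_bound
    {Ω : Type*} [MeasurableSpace Ω] (μ : Measure Ω) [IsProbabilityMeasure μ]
    {p : ℕ} (G : Matrix (Fin p) (Fin p) ℝ) (hG : G.PosSemidef)
    (ξ : Ω → (Fin p → ℝ)) (hmeas : Measurable ξ)
    (hgauss : IsCenteredGaussian G (μ.map ξ))
    (m : ℕ) (hm : 2 ≤ m) :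
    LoewnerLE (matExpect μ fun ω => (vecMulVec (ξ ω) (ξ ω)) ^ m)
      ((2 ^ m * (m.factorial : ℝ) * G.trace ^ (m - 1)) • G) :=
  wishart_moment_bound_general μ G hG ξ hmeas hgauss m hm

end Paper
end
end
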